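/- If a density matrix $\rho$ on $\mathbb{C}^2\otimes\mathbb{C}^d$ satisfies the inequality $\langle 2I_2\otimes I_d + (2-d)I_2\otimes B_1 + \sum_{k=2}^{d-1} 2I_2\otimes B_k + dA_3\otimes B_1\rangle_\rho \geq \big(\langle dI_2\otimes B_1 + 2A_3\otimes I_d + (2-d)A_3\otimes B_1 + \sum_{k=2}^{d-1} 2A_3\otimes B_k\rangle_\rho^2 + d^2\langle A_1\otimes B_d + A_2\otimes B_{d+1}\rangle_\rho^2\big)^{1/2}$ for all $A_i = U\sigma_iU^\dagger$, $B_j = V\lambda_jV^\dagger$ over all unitaries $U$ ($2\times 2$) and $V$ ($d\times d$), then the partial transpose $\rho^{T_1}$ is positive semidefinite (i.e., every NPT state violates the inequality for some choice of $U,V$). -/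

import Mathlib

open Matrix Kronecker
open scoped ComplexOrder

noncomputable section

abbrev M2 : Type := Matrix (Fin 2) (Fin 2) ℂ

def sig1 : M2 := Matrix.single 0 1 1 + Matrix.single 1 0 1
def sig2 : M2 := Complex.I • Matrix.single 0 1 1 - Complex.I • Matrix.single 1 0 1
def sig3 : M2 := Matrix.single 0 0 1 - Matrix.single 1 1 1

/-- partial transpose on the first (2-dimensional) factor -/
def PT {d : ℕ} (ρ : Matrix (Fin 2 × Fin d) (Fin 2 × Fin d) ℂ) :
    Matrix (Fin 2 × Fin d) (Fin 2 × Fin d) ℂ :=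
  fun p q => ρ (q.1, p.2) (p.1, q.2)

def expval {n : Type} [Fintype n] (ρ M : Matrix n n ℂ) : ℝ := ((ρ * M).trace).re

def proj {n : Type} (ψ : n → ℂ) : Matrix n n ℂ := Matrix.vecMulVec ψ (star ψ)

/-- λ_k = |0⟩⟨0| - |k⟩⟨k| for 1 ≤ k ≤ d-1 -/
def lamK (d : ℕ) (hd : 2 ≤ d) (k : Fin d) : Matrix (Fin d) (Fin d) ℂ :=
  Matrix.single ⟨0, by omega⟩ ⟨0, by omega⟩ 1 - Matrix.single k k 1

/-- λ_d = |0⟩⟨1| + |1⟩⟨0| -/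
def lamD (d : ℕ) (hd : 2 ≤ d) : Matrix (Fin d) (Fin d) ℂ :=
  Matrix.single ⟨0, by omega⟩ ⟨1, by omega⟩ 1 + Matrix.single ⟨1, by omega⟩ ⟨0, by omega⟩ 1

/-- λ_{d+1} = i|0⟩⟨1| - i|1⟩⟨0| -/
def lamD1 (d : ℕ) (hd : 2 ≤ d) : Matrix (Fin d) (Fin d) ℂ :=
  Complex.I • Matrix.single ⟨0, by omega⟩ ⟨1, by omega⟩ 1
    - Complex.I • Matrix.single ⟨1, by omega⟩ ⟨0, by omega⟩ 1

/-- A_i = U σ_i U† -/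
def dA (U : M2) (i : Fin 3) : M2 := U * (![sig1, sig2, sig3] i) * Uᴴ

/-- 2 I⊗I + (2-d) I⊗B₁ + Σ_{k=2}^{d-1} 2 I⊗B_k + d A₃⊗B₁ -/
def DObs0 (d : ℕ) (hd : 2 ≤ d) (U : M2) (V : Matrix (Fin d) (Fin d) ℂ) :
    Matrix (Fin 2 × Fin d) (Fin 2 × Fin d) ℂ :=
  (2:ℂ) • ((1:M2) ⊗ₖ (1 : Matrix (Fin d) (Fin d) ℂ))
    + ((2:ℂ) - (d:ℂ)) • ((1:M2) ⊗ₖ (V * lamK d hd ⟨1, by omega⟩ * Vᴴ))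
    + (∑ k ∈ Finset.univ.filter (fun k : Fin d => 2 ≤ (k : ℕ)),
        (2:ℂ) • ((1:M2) ⊗ₖ (V * lamK d hd k * Vᴴ)))
    + (d:ℂ) • (dA U 2 ⊗ₖ (V * lamK d hd ⟨1, by omega⟩ * Vᴴ))

/-- d I⊗B₁ + 2 A₃⊗I + (2-d) A₃⊗B₁ + Σ_{k=2}^{d-1} 2 A₃⊗B_k -/
def DObs1 (d : ℕ) (hd : 2 ≤ d) (U : M2) (V : Matrix (Fin d) (Fin d) ℂ) :
    Matrix (Fin 2 × Fin d) (Fin 2 × Fin d) ℂ :=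
  (d:ℂ) • ((1:M2) ⊗ₖ (V * lamK d hd ⟨1, by omega⟩ * Vᴴ))
    + (2:ℂ) • (dA U 2 ⊗ₖ (1 : Matrix (Fin d) (Fin d) ℂ))
    + ((2:ℂ) - (d:ℂ)) • (dA U 2 ⊗ₖ (V * lamK d hd ⟨1, by omega⟩ * Vᴴ))
    + (∑ k ∈ Finset.univ.filter (fun k : Fin d => 2 ≤ (k : ℕ)),
        (2:ℂ) • (dA U 2 ⊗ₖ (V * lamK d hd k * Vᴴ)))

/-- A₁⊗B_d + A₂⊗B_{d+1} -/
def DObs2 (d : ℕ) (hd : 2 ≤ d) (U : M2) (V : Matrix (Fin d) (Fin d) ℂ) :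
    Matrix (Fin 2 × Fin d) (Fin 2 × Fin d) ℂ :=
  dA U 0 ⊗ₖ (V * lamD d hd * Vᴴ) + dA U 1 ⊗ₖ (V * lamD1 d hd * Vᴴ)

/-!
Conjugating by `U ⊗ V` turns the three observables into `2d (|00⟩⟨00| + |11⟩⟨11|)`,
`2d (|00⟩⟨00| - |11⟩⟨11|)` and `2 (|01⟩⟨10| + |10⟩⟨01|)` evaluated in the rotated state
`ρ' = (U ⊗ V)† ρ (U ⊗ V)`, so the inequality for `(U, V)` says exactly
`(Re ρ'₁₀,₀₁)² ≤ ρ'₀₀,₀₀ ρ'₁₁,₁₁`.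

Every `x ∈ ℂ² ⊗ ℂᵈ` has a Schmidt decomposition `x = (U ⊗ V)(σ₀ |00⟩ + σ₁ |11⟩)` with real `σᵢ`,
and since `(U ⊗ V)† ρ^{T₁} (U ⊗ V) = ρ'^{T₁}` for `ρ'` rotated by `Ū ⊗ V`, we get
`⟨x, ρ^{T₁} x⟩ = σ₀² ρ'₀₀,₀₀ + σ₁² ρ'₁₁,₁₁ + 2 σ₀ σ₁ Re ρ'₁₀,₀₁`: a binary quadratic form with
nonnegative diagonal coefficients and, by the inequality for `(Ū, V)`, nonpositive discriminant.
-/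

theorem mul_conjTranspose_of_mem_unitaryGroup {n α : Type*} [Fintype n] [DecidableEq n]
    [CommRing α] [StarRing α] {U : Matrix n n α} (hU : U ∈ unitaryGroup n α) : U * Uᴴ = 1 :=
  mem_unitaryGroup_iff.mp hU

theorem exists_orthonormalBasis_eq_norm_smul {𝕜 E ι ι' : Type*} [RCLike 𝕜]
    [NormedAddCommGroup E] [InnerProductSpace 𝕜 E] [FiniteDimensional 𝕜 E] [Fintype ι']
    (card_ι' : Module.finrank 𝕜 E = Fintype.card ι') (e : ι ↪ ι') {w : ι → E}
    (hw : Pairwise fun i j => inner 𝕜 (w i) (w j) = 0) :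
    ∃ b : OrthonormalBasis ι' 𝕜 E, ∀ i, w i = (‖w i‖ : 𝕜) • b (e i) := by
  set v : ι' → E := Function.extend e (fun i => (‖w i‖⁻¹ : 𝕜) • w i) 0
  have hv_apply (i : ι) : v (e i) = (‖w i‖⁻¹ : 𝕜) • w i := e.injective.extend_apply _ _ _
  have hv : Orthonormal 𝕜 ((e '' {i | w i ≠ 0}).domRestrict v) := by
    refine ⟨?_, ?_⟩
    · rintro ⟨_, i, hi, rfl⟩
      simp [hv_apply, norm_smul, inv_mul_cancel₀ (norm_ne_zero_iff.mpr hi)]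
    · intro x y hxy
      obtain ⟨i, -, hx⟩ := x.2
      obtain ⟨j, -, hy⟩ := y.2
      have hij : i ≠ j := by
        rintro rfl
        exact hxy (Subtype.ext (hx.symm.trans hy))
      simp [← hx, ← hy, hv_apply, inner_smul_left, inner_smul_right, hw hij]
  obtain ⟨b, hb⟩ := hv.exists_orthonormalBasis_extension_of_card_eq card_ι'
  refine ⟨b, fun i => ?_⟩
  by_cases hi : w i = 0
  · simp [hi]
  · rw [hb _ ⟨i, hi, rfl⟩, hv_apply, smul_smul]
    simp [hi]

/- With `U` diagonalising `X Xᴴ`, the columns of `Xᴴ U` are orthogonal; normalising them and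
completing to an orthonormal basis gives `V`. -/
theorem exists_schmidt_decomposition {m n : Type*} [Fintype m] [DecidableEq m] [Fintype n]
    [DecidableEq n] (e : m ↪ n) (x : m × n → ℂ) :
    ∃ U ∈ unitaryGroup m ℂ, ∃ V ∈ unitaryGroup n ℂ, ∃ σ : m → ℝ,
      x = (U ⊗ₖ V) *ᵥ ∑ i, (σ i : ℂ) • Pi.single (i, e i) 1 := by
  set X : Matrix m n ℂ := of fun a b => x (a, b)
  have hH : (X * Xᴴ).IsHermitian := isHermitian_mul_conjTranspose_self X
  set U : Matrix m m ℂ := (hH.eigenvectorUnitary : Matrix m m ℂ)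
  set W : Matrix n m ℂ := Xᴴ * U
  have hWW : Wᴴ * W = diagonal (RCLike.ofReal ∘ hH.eigenvalues) := by
    rw [← hH.conjStarAlgAut_star_eigenvectorUnitary, Unitary.conjStarAlgAut_star_apply]
    simp [W, U, conjTranspose_mul, Matrix.mul_assoc, star_eq_conjTranspose]
  set w : m → EuclideanSpace ℂ n := fun i => WithLp.toLp 2 fun b => W b i
  have hw : Pairwise fun i j => inner ℂ (w i) (w j) = 0 := by
    intro i j hij
    have := congrFun₂ hWW i j
    simp only [diagonal_apply_ne _ hij, mul_apply, conjTranspose_apply] at this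
    simp [w, EuclideanSpace.inner_toLp_toLp, dotProduct, ← this, mul_comm]
  obtain ⟨b, hb⟩ := exists_orthonormalBasis_eq_norm_smul finrank_euclideanSpace e hw
  set V : Matrix n n ℂ := ((EuclideanSpace.basisFun n ℂ).toBasis.toMatrix b).map star
  have hV : V ∈ unitaryGroup n ℂ := map_star_mem_unitaryGroup_iff.mpr
    ((EuclideanSpace.basisFun n ℂ).toMatrix_orthonormalBasis_mem_unitary b)
  have hX : X = U * Wᴴ := by
    rw [conjTranspose_mul, conjTranspose_conjTranspose, ← Matrix.mul_assoc,
      mul_conjTranspose_of_mem_unitaryGroup hH.eigenvectorUnitary.2, Matrix.one_mul]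
  refine ⟨U, hH.eigenvectorUnitary.2, V, hV, fun i => ‖w i‖, ?_⟩
  ext ⟨a, c⟩
  have hW (i : m) : W c i = ‖w i‖ * star (V c (e i)) := by
    simpa [w, V, Module.Basis.toMatrix_apply] using congrArg (fun v => v c) (hb i)
  rw [show x (a, c) = X a c from rfl, hX]
  simp only [mul_apply, conjTranspose_apply, hW, mulVec_sum, mulVec_smul, mulVec_single_one,
    Finset.sum_apply, Pi.smul_apply, col_apply, kronecker_apply, smul_eq_mul]
  refine Finset.sum_congr rfl fun i _ => ?_
  rw [star_mul', star_star, Complex.star_def, Complex.conj_ofReal]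
  ring

section Kronecker

variable {l m n p α : Type*}

theorem kronecker_sub [NonUnitalNonAssocRing α] (A : Matrix l m α) (B₁ B₂ : Matrix n p α) :
    A ⊗ₖ (B₁ - B₂) = A ⊗ₖ B₁ - A ⊗ₖ B₂ := by
  ext; simp [mul_sub]

theorem sub_kronecker [NonUnitalNonAssocRing α] (A₁ A₂ : Matrix l m α) (B : Matrix n p α) :
    (A₁ - A₂) ⊗ₖ B = A₁ ⊗ₖ B - A₂ ⊗ₖ B := by
  ext; simp [sub_mul]

theorem kronecker_finsetSum {ι : Type*} [NonUnitalNonAssocSemiring α] (A : Matrix l m α)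
    (s : Finset ι) (B : ι → Matrix n p α) : A ⊗ₖ (∑ k ∈ s, B k) = ∑ k ∈ s, A ⊗ₖ B k := by
  ext; simp [Matrix.sum_apply, Finset.mul_sum]

theorem kronecker_conjTranspose_conj [Fintype m] [Fintype n] (U A : Matrix m m ℂ)
    (V B : Matrix n n ℂ) :
    (U * A * Uᴴ) ⊗ₖ (V * B * Vᴴ) = (U ⊗ₖ V) * (A ⊗ₖ B) * (U ⊗ₖ V)ᴴ := by
  rw [conjTranspose_kronecker, mul_kronecker_mul, mul_kronecker_mul]

end Kronecker

section PartialTranspose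

variable {d : ℕ}

theorem PT_isHermitian {ρ : Matrix (Fin 2 × Fin d) (Fin 2 × Fin d) ℂ} (hρ : ρ.IsHermitian) :
    (PT ρ).IsHermitian := by
  ext p q
  exact congrFun₂ hρ (q.1, p.2) (p.1, q.2)

theorem conjTranspose_kronecker_mul_PT_mul_kronecker
    (ρ : Matrix (Fin 2 × Fin d) (Fin 2 × Fin d) ℂ) (A : M2) (B : Matrix (Fin d) (Fin d) ℂ) :
    (A ⊗ₖ B)ᴴ * PT ρ * (A ⊗ₖ B) = PT ((A.map star ⊗ₖ B)ᴴ * ρ * (A.map star ⊗ₖ B)) := by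
  ext p q
  simp only [mul_apply, conjTranspose_apply, PT, kroneckerMap_apply, map_apply, Finset.sum_mul,
    ← Finset.univ_product_univ, ← Finset.sum_product']
  let swapFst : (Fin 2 × Fin d) × (Fin 2 × Fin d) ≃ (Fin 2 × Fin d) × (Fin 2 × Fin d) :=
    ⟨fun r => ((r.2.1, r.1.2), (r.1.1, r.2.2)), fun r => ((r.2.1, r.1.2), (r.1.1, r.2.2)),
      fun _ => rfl, fun _ => rfl⟩
  refine Fintype.sum_equiv swapFst _ _ fun r => ?_
  simp only [swapFst, Equiv.coe_fn_mk, star_mul', star_star]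
  ring

theorem star_kronecker_mulVec_dotProduct_PT_mulVec
    (ρ : Matrix (Fin 2 × Fin d) (Fin 2 × Fin d) ℂ) (A : M2) (B : Matrix (Fin d) (Fin d) ℂ)
    (y : Fin 2 × Fin d → ℂ) :
    star ((A ⊗ₖ B) *ᵥ y) ⬝ᵥ PT ρ *ᵥ (A ⊗ₖ B) *ᵥ y
      = star y ⬝ᵥ PT ((A.map star ⊗ₖ B)ᴴ * ρ * (A.map star ⊗ₖ B)) *ᵥ y := by
  rw [← conjTranspose_kronecker_mul_PT_mul_kronecker]
  simp only [star_mulVec, dotProduct_mulVec, vecMul_vecMul]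

theorem star_dotProduct_mulVec_sum_smul_single {ι κ : Type*} [Fintype ι] [Fintype κ]
    [DecidableEq κ] (M : Matrix κ κ ℂ) (p : ι → κ) (c : ι → ℂ) :
    star (∑ i, c i • Pi.single (p i) 1) ⬝ᵥ M *ᵥ ∑ i, c i • Pi.single (p i) 1
      = ∑ i, ∑ j, star (c i) * c j * M (p i) (p j) := by
  simp only [star_sum, star_smul, Pi.star_single, star_one, mulVec_sum, mulVec_smul,
    mulVec_single_one, sum_dotProduct, smul_dotProduct, dotProduct_sum, dotProduct_smul,
    single_one_dotProduct, col_apply, smul_eq_mul]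
  rw [Finset.sum_comm]
  refine Finset.sum_congr rfl fun j _ => ?_
  rw [Finset.mul_sum]
  exact Finset.sum_congr rfl fun i _ => by ring

theorem re_star_dotProduct_PT_mulVec_schmidt (hd : 2 ≤ d)
    {ρ : Matrix (Fin 2 × Fin d) (Fin 2 × Fin d) ℂ} (hρ : ρ.IsHermitian) (σ : Fin 2 → ℝ) :
    RCLike.re (star (∑ i, (σ i : ℂ) • Pi.single (i, Fin.castLEEmb hd i) 1) ⬝ᵥ
        PT ρ *ᵥ ∑ i, (σ i : ℂ) • Pi.single (i, Fin.castLEEmb hd i) 1)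
      = σ 0 ^ 2 * (ρ (0, ⟨0, by omega⟩) (0, ⟨0, by omega⟩)).re
        + σ 1 ^ 2 * (ρ (1, ⟨1, by omega⟩) (1, ⟨1, by omega⟩)).re
        + 2 * σ 0 * σ 1 * (ρ (1, ⟨0, by omega⟩) (0, ⟨1, by omega⟩)).re := by
  have hre : (ρ (0, ⟨1, by omega⟩) (1, ⟨0, by omega⟩)).re
      = (ρ (1, ⟨0, by omega⟩) (0, ⟨1, by omega⟩)).re := by
    rw [← hρ.apply]
    simp
  rw [star_dotProduct_mulVec_sum_smul_single]
  simp only [Fin.sum_univ_two, show Fin.castLEEmb hd 0 = ⟨0, by omega⟩ from rfl,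
    show Fin.castLEEmb hd 1 = ⟨1, by omega⟩ from rfl]
  simp only [PT, RCLike.star_def, Complex.conj_ofReal, ← Complex.ofReal_mul,
    RCLike.re_to_complex, Complex.add_re, Complex.re_ofReal_mul, hre]
  ring

end PartialTranspose

theorem expval_add {n : Type} [Fintype n] (ρ M N : Matrix n n ℂ) :
    expval ρ (M + N) = expval ρ M + expval ρ N := by
  simp [expval, Matrix.mul_add]

theorem expval_sub {n : Type} [Fintype n] (ρ M N : Matrix n n ℂ) :
    expval ρ (M - N) = expval ρ M - expval ρ N := by
  simp [expval, Matrix.mul_sub]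

theorem expval_real_smul {n : Type} [Fintype n] (ρ M : Matrix n n ℂ) (r : ℝ) :
    expval ρ (r • M) = r * expval ρ M := by
  simp [expval]

theorem expval_single_kronecker_single {m n : Type} [Fintype m] [DecidableEq m] [Fintype n]
    [DecidableEq n] (ρ : Matrix (m × n) (m × n) ℂ) (a b : m) (c e : n) :
    expval ρ (single a b 1 ⊗ₖ single c e 1) = (ρ (b, e) (a, c)).re := by
  simp [expval, single_kronecker_single, trace_mul_single]

theorem expval_mul_mul_conjTranspose {n : Type} [Fintype n] (ρ M W : Matrix n n ℂ) :
    expval ρ (W * M * Wᴴ) = expval (Wᴴ * ρ * W) M := by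
  rw [expval, expval, ← Matrix.mul_assoc, trace_mul_comm, ← Matrix.mul_assoc,
    ← Matrix.mul_assoc]

section Observables

variable {d : ℕ} (hd : 2 ≤ d)

theorem filter_not_two_le_eq :
    ({k | ¬ 2 ≤ (k : ℕ)} : Finset (Fin d)) = {⟨0, by omega⟩, ⟨1, by omega⟩} := by
  ext ⟨k, hk⟩
  simp only [Finset.mem_filter, Finset.mem_univ, true_and, Finset.mem_insert,
    Finset.mem_singleton, Fin.mk.injEq]
  omega

theorem sum_lamK_filter_two_le :
    ∑ k ∈ Finset.univ.filter (fun k : Fin d => 2 ≤ (k : ℕ)), lamK d hd k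
      = ((d : ℂ) - 1) • single ⟨0, by omega⟩ ⟨0, by omega⟩ 1
        + single ⟨1, by omega⟩ ⟨1, by omega⟩ 1 - 1 := by
  have hsum : ∑ k : Fin d, lamK d hd k
      = (d : ℂ) • single ⟨0, by omega⟩ ⟨0, by omega⟩ 1 - 1 := by
    simp [lamK, Finset.sum_sub_distrib, sum_single_one]
  rw [← Finset.sum_filter_add_sum_filter_not _ (fun k : Fin d => 2 ≤ (k : ℕ)),
    filter_not_two_le_eq hd, Finset.sum_pair (by simp)] at hsum
  rw [eq_sub_of_add_eq hsum]
  simp only [lamK, sub_self]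
  module

theorem one_fin_two_eq_single_add_single : (1 : M2) = single 0 0 1 + single 1 1 1 := by
  rw [← sum_single_one, Fin.sum_univ_two]

theorem DObs0_one_one : DObs0 d hd 1 1 = (2 * d : ℝ) •
    (single 0 0 1 ⊗ₖ single ⟨0, by omega⟩ ⟨0, by omega⟩ 1
      + single 1 1 1 ⊗ₖ single ⟨1, by omega⟩ ⟨1, by omega⟩ 1) := by
  simp only [DObs0, dA, Matrix.one_mul, Matrix.mul_one, conjTranspose_one, ← Finset.smul_sum,
    ← kronecker_finsetSum, sum_lamK_filter_two_le]
  simp only [Matrix.cons_val, sig3, lamK, one_fin_two_eq_single_add_single]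
  simp only [add_kronecker, kronecker_add, sub_kronecker, kronecker_sub, kronecker_smul]
  module

theorem DObs1_one_one : DObs1 d hd 1 1 = (2 * d : ℝ) •
    (single 0 0 1 ⊗ₖ single ⟨0, by omega⟩ ⟨0, by omega⟩ 1
      - single 1 1 1 ⊗ₖ single ⟨1, by omega⟩ ⟨1, by omega⟩ 1) := by
  simp only [DObs1, dA, Matrix.one_mul, Matrix.mul_one, conjTranspose_one, ← Finset.smul_sum,
    ← kronecker_finsetSum, sum_lamK_filter_two_le]
  simp only [Matrix.cons_val, sig3, lamK, one_fin_two_eq_single_add_single]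
  simp only [add_kronecker, kronecker_add, sub_kronecker, kronecker_sub, kronecker_smul]
  module

theorem DObs2_one_one : DObs2 d hd 1 1 = (2 : ℝ) •
    (single 0 1 1 ⊗ₖ single ⟨1, by omega⟩ ⟨0, by omega⟩ 1
      + single 1 0 1 ⊗ₖ single ⟨0, by omega⟩ ⟨1, by omega⟩ 1) := by
  simp only [DObs2, dA, Matrix.one_mul, Matrix.mul_one, conjTranspose_one]
  simp only [Matrix.cons_val, sig1, sig2, lamD, lamD1]
  simp only [add_kronecker, kronecker_add, sub_kronecker, kronecker_sub, kronecker_smul,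
    smul_kronecker]
  match_scalars <;> ring_nf <;> simp only [Complex.I_sq] <;> ring

variable {U : M2} {V : Matrix (Fin d) (Fin d) ℂ}

theorem expval_DObs0_conj (hU : U ∈ unitaryGroup (Fin 2) ℂ)
    (hV : V ∈ unitaryGroup (Fin d) ℂ) (ρ : Matrix (Fin 2 × Fin d) (Fin 2 × Fin d) ℂ) :
    expval ρ (DObs0 d hd U V) = expval ((U ⊗ₖ V)ᴴ * ρ * (U ⊗ₖ V)) (DObs0 d hd 1 1) := by
  rw [← expval_mul_mul_conjTranspose]
  congr 1
  simp only [DObs0, dA, Matrix.mul_add, Matrix.add_mul, Matrix.mul_smul, Matrix.smul_mul,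
    Finset.mul_sum, Finset.sum_mul, ← kronecker_conjTranspose_conj, Matrix.one_mul,
    Matrix.mul_one, conjTranspose_one, mul_conjTranspose_of_mem_unitaryGroup hU,
    mul_conjTranspose_of_mem_unitaryGroup hV]

theorem expval_DObs1_conj (hU : U ∈ unitaryGroup (Fin 2) ℂ)
    (hV : V ∈ unitaryGroup (Fin d) ℂ) (ρ : Matrix (Fin 2 × Fin d) (Fin 2 × Fin d) ℂ) :
    expval ρ (DObs1 d hd U V) = expval ((U ⊗ₖ V)ᴴ * ρ * (U ⊗ₖ V)) (DObs1 d hd 1 1) := by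
  rw [← expval_mul_mul_conjTranspose]
  congr 1
  simp only [DObs1, dA, Matrix.mul_add, Matrix.add_mul, Matrix.mul_smul, Matrix.smul_mul,
    Finset.mul_sum, Finset.sum_mul, ← kronecker_conjTranspose_conj, Matrix.one_mul,
    Matrix.mul_one, conjTranspose_one, mul_conjTranspose_of_mem_unitaryGroup hU,
    mul_conjTranspose_of_mem_unitaryGroup hV]

theorem expval_DObs2_conj (ρ : Matrix (Fin 2 × Fin d) (Fin 2 × Fin d) ℂ) :
    expval ρ (DObs2 d hd U V) = expval ((U ⊗ₖ V)ᴴ * ρ * (U ⊗ₖ V)) (DObs2 d hd 1 1) := by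
  rw [← expval_mul_mul_conjTranspose]
  congr 1
  simp only [DObs2, dA, Matrix.mul_add, Matrix.add_mul, ← kronecker_conjTranspose_conj,
    Matrix.one_mul, Matrix.mul_one, conjTranspose_one]

theorem expval_DObs0_one_one (ρ : Matrix (Fin 2 × Fin d) (Fin 2 × Fin d) ℂ) :
    expval ρ (DObs0 d hd 1 1) = 2 * d * ((ρ (0, ⟨0, by omega⟩) (0, ⟨0, by omega⟩)).re
      + (ρ (1, ⟨1, by omega⟩) (1, ⟨1, by omega⟩)).re) := by
  rw [DObs0_one_one, expval_real_smul, expval_add, expval_single_kronecker_single,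
    expval_single_kronecker_single]

theorem expval_DObs1_one_one (ρ : Matrix (Fin 2 × Fin d) (Fin 2 × Fin d) ℂ) :
    expval ρ (DObs1 d hd 1 1) = 2 * d * ((ρ (0, ⟨0, by omega⟩) (0, ⟨0, by omega⟩)).re
      - (ρ (1, ⟨1, by omega⟩) (1, ⟨1, by omega⟩)).re) := by
  rw [DObs1_one_one, expval_real_smul, expval_sub, expval_single_kronecker_single,
    expval_single_kronecker_single]

theorem expval_DObs2_one_one {ρ : Matrix (Fin 2 × Fin d) (Fin 2 × Fin d) ℂ}
    (hρ : ρ.IsHermitian) :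
    expval ρ (DObs2 d hd 1 1) = 4 * (ρ (1, ⟨0, by omega⟩) (0, ⟨1, by omega⟩)).re := by
  rw [DObs2_one_one, expval_real_smul, expval_add, expval_single_kronecker_single,
    expval_single_kronecker_single, ← hρ.apply (0, _), Complex.star_def, Complex.conj_re]
  ring

end Observables

theorem sq_le_mul_of_sqrt_le {d r₀ r₁ t : ℝ} (hd : 0 < d)
    (h : √((2 * d * (r₀ - r₁)) ^ 2 + d ^ 2 * (4 * t) ^ 2) ≤ 2 * d * (r₀ + r₁)) :
    t ^ 2 ≤ r₀ * r₁ := by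
  obtain ⟨-, h⟩ := Real.sqrt_le_iff.mp h
  nlinarith [pow_pos hd 2]

theorem quadratic_form_nonneg_of_sq_le {r₀ r₁ t : ℝ} (h₀ : 0 ≤ r₀) (h₁ : 0 ≤ r₁)
    (ht : t ^ 2 ≤ r₀ * r₁) (a b : ℝ) : 0 ≤ a ^ 2 * r₀ + b ^ 2 * r₁ + 2 * a * b * t := by
  rcases h₀.eq_or_lt with rfl | h₀
  · obtain rfl : t = 0 := by nlinarith
    nlinarith [sq_nonneg b]
  · refine nonneg_of_mul_nonneg_right ?_ h₀
    nlinarith [sq_nonneg (a * r₀ + b * t), mul_nonneg (sq_nonneg b) (sub_nonneg.mpr ht)]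

theorem sq_re_le_of_sqrt_le {d : ℕ} (hd : 2 ≤ d) {ρ : Matrix (Fin 2 × Fin d) (Fin 2 × Fin d) ℂ}
    (hρ : ρ.IsHermitian)
    (h : √(expval ρ (DObs1 d hd 1 1) ^ 2 + (d : ℝ) ^ 2 * expval ρ (DObs2 d hd 1 1) ^ 2)
      ≤ expval ρ (DObs0 d hd 1 1)) :
    (ρ (1, ⟨0, by omega⟩) (0, ⟨1, by omega⟩)).re ^ 2
      ≤ (ρ (0, ⟨0, by omega⟩) (0, ⟨0, by omega⟩)).re
        * (ρ (1, ⟨1, by omega⟩) (1, ⟨1, by omega⟩)).re := by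
  rw [expval_DObs0_one_one, expval_DObs1_one_one, expval_DObs2_one_one hd hρ] at h
  exact sq_le_mul_of_sqrt_le (by positivity) h

theorem stmt_17_general (d : ℕ) (hd : 2 ≤ d)
    (ρ : Matrix (Fin 2 × Fin d) (Fin 2 × Fin d) ℂ)
    (hpsd : ρ.PosSemidef)
    (h : ∀ (U : M2) (V : Matrix (Fin d) (Fin d) ℂ),
        U ∈ Matrix.unitaryGroup (Fin 2) ℂ → V ∈ Matrix.unitaryGroup (Fin d) ℂ →
        Real.sqrt ((expval ρ (DObs1 d hd U V))^2 + (d:ℝ)^2 * (expval ρ (DObs2 d hd U V))^2)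
          ≤ expval ρ (DObs0 d hd U V)) :
    (PT ρ).PosSemidef := by
  rw [posSemidef_iff_dotProduct_mulVec]
  refine ⟨PT_isHermitian hpsd.isHermitian, fun x => ?_⟩
  obtain ⟨U, hU, V, hV, σ, rfl⟩ := exists_schmidt_decomposition (Fin.castLEEmb hd) x
  have hU' : U.map star ∈ unitaryGroup (Fin 2) ℂ := map_star_mem_unitaryGroup_iff.mpr hU
  set ρ' := (U.map star ⊗ₖ V)ᴴ * ρ * (U.map star ⊗ₖ V)
  have hρ' : ρ'.PosSemidef := hpsd.conjTranspose_mul_mul_same _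
  have hineq := h _ _ hU' hV
  rw [expval_DObs0_conj hd hU' hV, expval_DObs1_conj hd hU' hV, expval_DObs2_conj hd] at hineq
  rw [star_kronecker_mulVec_dotProduct_PT_mulVec, RCLike.nonneg_iff,
    re_star_dotProduct_PT_mulVec_schmidt hd hρ'.isHermitian]
  exact ⟨quadratic_form_nonneg_of_sq_le (Complex.nonneg_iff.mp hρ'.diag_nonneg).1
      (Complex.nonneg_iff.mp hρ'.diag_nonneg).1 (sq_re_le_of_sqrt_le hd hρ'.isHermitian hineq)
      _ _,
    (PT_isHermitian hρ'.isHermitian).im_star_dotProduct_mulVec_self _⟩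

theorem stmt_17 (d : ℕ) (hd : 2 ≤ d)
    (ρ : Matrix (Fin 2 × Fin d) (Fin 2 × Fin d) ℂ)
    (hpsd : ρ.PosSemidef) (htr : ρ.trace = 1)
    (h : ∀ (U : M2) (V : Matrix (Fin d) (Fin d) ℂ),
        U ∈ Matrix.unitaryGroup (Fin 2) ℂ → V ∈ Matrix.unitaryGroup (Fin d) ℂ →
        Real.sqrt ((expval ρ (DObs1 d hd U V))^2 + (d:ℝ)^2 * (expval ρ (DObs2 d hd U V))^2)
          ≤ expval ρ (DObs0 d hd U V)) :
    (PT ρ).PosSemidef :=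
  stmt_17_general d hd ρ hpsd h
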